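/- arXiv:2605.18724 — 7 statements merged into one kernel-verified Lean document; each statement's English description precedes it below -/
import Mathlib

section
/- Let F0 and F1 be probability measures on a measurable space with F1 absolutely continuous with respect to F0, and suppose the Radon–Nikodym derivative dF1/dF0 is bounded above by a constant γ ≥ 1 (F0-almost everywhere). Then for every measurable set A, F1(A) − F0(A) ≤ (γ − 1)/γ. -/
/-!
Since `F1 = F0.withDensity (dF1/dF0) ≤ γ • F0`, we have `F1 A ≤ γ F0 A`. Then
`γ (F1 A - F0 A) ≤ γ F1 A - F1 A = (γ - 1) F1 A ≤ γ - 1`.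
-/

open MeasureTheory

namespace MeasureTheory.Measure

variable {α : Type*} [MeasurableSpace α] {μ ν : Measure α}

theorem le_smul_of_rnDeriv_le [μ.HaveLebesgueDecomposition ν] (hμν : μ ≪ ν) {c : ENNReal}
    (hc : ∀ᵐ x ∂ν, μ.rnDeriv ν x ≤ c) : μ ≤ c • ν :=
  calc μ = ν.withDensity (μ.rnDeriv ν) := (withDensity_rnDeriv_eq μ ν hμν).symm
    _ ≤ ν.withDensity fun _ ↦ c := withDensity_mono hc
    _ = c • ν := withDensity_const c

end MeasureTheory.Measure

theorem sub_le_sub_one_div_of_le_mul {K : Type*} [Field K] [LinearOrder K]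
    [IsStrictOrderedRing K] {a b γ : K} (hγ : 1 ≤ γ) (ha : a ≤ 1) (hab : a ≤ γ * b) :
    a - b ≤ (γ - 1) / γ := by
  have hγ0 : 0 < γ := zero_lt_one.trans_le hγ
  rw [le_div_iff₀' hγ0]
  calc γ * (a - b) ≤ γ * a - a := by linarith
    _ = (γ - 1) * a := by ring
    _ ≤ (γ - 1) * 1 := mul_le_mul_of_nonneg_left ha (sub_nonneg.mpr hγ)
    _ = γ - 1 := mul_one _

theorem set_diff_upper_bound_general
    {Ω : Type*} [MeasurableSpace Ω]
    (F0 F1 : Measure Ω) [IsProbabilityMeasure F0] [IsProbabilityMeasure F1]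
    (γ : ℝ) (hγ : 1 ≤ γ)
    (habs : F1 ≪ F0)
    (hbound : ∀ᵐ u ∂F0, F1.rnDeriv F0 u ≤ ENNReal.ofReal γ)
    (A : Set Ω) :
    (F1 A).toReal - (F0 A).toReal ≤ (γ - 1) / γ := by
  have hle : F1 A ≤ ENNReal.ofReal γ * F0 A := Measure.le_smul_of_rnDeriv_le habs hbound A
  have hle_real : (F1 A).toReal ≤ γ * (F0 A).toReal := by
    simpa [ENNReal.toReal_mul, ENNReal.toReal_ofReal (zero_le_one.trans hγ)] using
      ENNReal.toReal_mono (by finiteness) hle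
  exact sub_le_sub_one_div_of_le_mul hγ measureReal_le_one hle_real

theorem set_diff_upper_bound
    {Ω : Type*} [MeasurableSpace Ω]
    (F0 F1 : Measure Ω) [IsProbabilityMeasure F0] [IsProbabilityMeasure F1]
    (γ : ℝ) (hγ : 1 ≤ γ)
    (habs : F1 ≪ F0)
    (hbound : ∀ᵐ u ∂F0, F1.rnDeriv F0 u ≤ ENNReal.ofReal γ)
    (A : Set Ω) (hA : MeasurableSet A) :
    (F1 A).toReal - (F0 A).toReal ≤ (γ - 1) / γ :=
  set_diff_upper_bound_general F0 F1 γ hγ habs hbound A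
end

section
/- Let F0 and F1 be probability measures on a measurable space with F1 ≪ F0 and dF1/dF0 ≤ γ F0-almost everywhere for some γ ≥ 1. Then for every measurable set A, F0(A) − F1(A) ≤ (γ − 1)/γ. -/
open MeasureTheory

namespace MeasureTheory.Measure

variable {Ω : Type*} [MeasurableSpace Ω]

theorem le_smul_of_rnDeriv_le_s1 {μ ν : Measure Ω} [ν.HaveLebesgueDecomposition μ] {c : ENNReal}
    (hνμ : ν ≪ μ) (hc : ∀ᵐ x ∂μ, ν.rnDeriv μ x ≤ c) : ν ≤ c • μ :=
  calc ν = μ.withDensity (ν.rnDeriv μ) := (withDensity_rnDeriv_eq ν μ hνμ).symm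
    _ ≤ μ.withDensity fun _ ↦ c := withDensity_mono hc
    _ = c • μ := withDensity_const c

theorem real_sub_real_le_of_le_smul {μ ν : Measure Ω} [IsProbabilityMeasure μ]
    [IsProbabilityMeasure ν] {γ : ℝ} (hγ : 1 ≤ γ) (hνμ : ν ≤ ENNReal.ofReal γ • μ)
    {A : Set Ω} (hA : MeasurableSet A) : μ.real A - ν.real A ≤ (γ - 1) / γ := by
  have hcompl : ν.real Aᶜ ≤ γ * μ.real Aᶜ := by
    have h := hνμ Aᶜ
    rw [smul_apply, smul_eq_mul] at h
    have := ENNReal.toReal_mono (by finiteness) h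
    rwa [ENNReal.toReal_mul, ENNReal.toReal_ofReal (by linarith)] at this
  rw [probReal_compl_eq_one_sub hA, probReal_compl_eq_one_sub hA] at hcompl
  rw [le_div_iff₀ (by linarith)]
  -- γ (μ A - ν A) ≤ γ μ A - ν A ≤ γ - 1, the last step being the bound on Aᶜ.
  nlinarith [mul_nonneg (sub_nonneg.2 hγ) (measureReal_nonneg (μ := ν) (s := A))]

end MeasureTheory.Measure

theorem set_diff_lower_bound
    {Ω : Type*} [MeasurableSpace Ω]
    (F0 F1 : Measure Ω) [IsProbabilityMeasure F0] [IsProbabilityMeasure F1]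
    (γ : ℝ) (hγ : 1 ≤ γ)
    (habs : F1 ≪ F0)
    (hbound : ∀ᵐ u ∂F0, F1.rnDeriv F0 u ≤ ENNReal.ofReal γ)
    (A : Set Ω) (hA : MeasurableSet A) :
    (F0 A).toReal - (F1 A).toReal ≤ (γ - 1) / γ :=
  Measure.real_sub_real_le_of_le_smul hγ (Measure.le_smul_of_rnDeriv_le_s1 habs hbound) hA
end

section
/- Let F0 and F1 be probability measures with F1 ≪ F0 and dF1/dF0 ≤ γ F0-a.e. for γ ≥ 1, and let r be a measurable function with values in [0,1]. Then |∫ r dF1 − ∫ r dF0| ≤ (γ − 1)/γ. -/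
/-! With `f = dF1/dF0` we have `∫ r dF1 - ∫ r dF0 = ∫ r (f - 1) dF0`, and `0 ≤ f ≤ γ` gives the
pointwise bound `r (f - 1) ≤ (1 - 1/γ) f`, whose integral is `1 - 1/γ`. Applying this to `1 - r`
bounds the difference from the other side. -/

open MeasureTheory

lemma mul_sub_one_le_div_mul_of_le {r f γ : ℝ} (hγ : 1 ≤ γ) (hr : r ∈ Set.Icc (0 : ℝ) 1)
    (hf0 : 0 ≤ f) (hfγ : f ≤ γ) : r * (f - 1) ≤ (γ - 1) / γ * f := by
  have hγ0 : 0 < γ := zero_lt_one.trans_le hγ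
  rw [div_mul_eq_mul_div, le_div_iff₀ hγ0]
  rcases le_total 1 f with h1 | h1
  · have : r * (f - 1) ≤ f - 1 := mul_le_of_le_one_left (by linarith) hr.2
    nlinarith
  · have : r * (f - 1) ≤ 0 := mul_nonpos_of_nonneg_of_nonpos hr.1 (by linarith)
    nlinarith

section

variable {Ω : Type*} [MeasurableSpace Ω]

lemma integrable_of_forall_mem_Icc {μ : Measure Ω} [IsFiniteMeasure μ]
    {r : Ω → ℝ} (hr : Measurable r) (hr01 : ∀ ω, r ω ∈ Set.Icc (0 : ℝ) 1) : Integrable r μ :=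
  .of_bound hr.aestronglyMeasurable 1 <| .of_forall fun ω ↦ by
    rw [Real.norm_eq_abs, abs_le]
    exact ⟨by linarith [(hr01 ω).1], (hr01 ω).2⟩

lemma integral_sub_integral_le_of_rnDeriv_le {F0 F1 : Measure Ω} [IsFiniteMeasure F0]
    [IsProbabilityMeasure F1] {γ : ℝ} (hγ : 1 ≤ γ)
    (habs : F1 ≪ F0) (hbound : ∀ᵐ u ∂F0, F1.rnDeriv F0 u ≤ ENNReal.ofReal γ)
    {r : Ω → ℝ} (hr : Measurable r) (hr01 : ∀ ω, r ω ∈ Set.Icc (0 : ℝ) 1) :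
    ∫ ω, r ω ∂F1 - ∫ ω, r ω ∂F0 ≤ (γ - 1) / γ := by
  set f : Ω → ℝ := fun ω ↦ (F1.rnDeriv F0 ω).toReal
  have hf_int : ∫ ω, f ω ∂F0 = 1 := by simp [f, Measure.integral_toReal_rnDeriv habs]
  have hfr : ∫ ω, r ω ∂F1 = ∫ ω, f ω * r ω ∂F0 := (integral_rnDeriv_smul habs).symm
  have hfr_int : Integrable (fun ω ↦ f ω * r ω) F0 :=
    (integrable_toReal_rnDeriv_mul_iff habs).2 (integrable_of_forall_mem_Icc hr hr01)
  calc ∫ ω, r ω ∂F1 - ∫ ω, r ω ∂F0 = ∫ ω, r ω * (f ω - 1) ∂F0 := by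
        rw [hfr, ← integral_sub hfr_int (integrable_of_forall_mem_Icc hr hr01)]
        congr 1 with ω
        ring
    _ ≤ ∫ ω, (γ - 1) / γ * f ω ∂F0 := by
        refine integral_mono_ae ?_ (Measure.integrable_toReal_rnDeriv.const_mul _) ?_
        · exact (hfr_int.sub (integrable_of_forall_mem_Icc hr hr01)).congr
            (.of_forall fun ω ↦ by simp only [Pi.sub_apply]; ring)
        filter_upwards [hbound] with ω hω
        exact mul_sub_one_le_div_mul_of_le hγ (hr01 ω) ENNReal.toReal_nonneg
          (ENNReal.toReal_le_of_le_ofReal (zero_le_one.trans hγ) hω)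
    _ = (γ - 1) / γ := by rw [integral_const_mul, hf_int, mul_one]

end

theorem integral_diff_bound_unit_function
    {Ω : Type*} [MeasurableSpace Ω]
    (F0 F1 : Measure Ω) [IsProbabilityMeasure F0] [IsProbabilityMeasure F1]
    (γ : ℝ) (hγ : 1 ≤ γ)
    (habs : F1 ≪ F0)
    (hbound : ∀ᵐ u ∂F0, F1.rnDeriv F0 u ≤ ENNReal.ofReal γ)
    (r : Ω → ℝ) (hr : Measurable r) (hr01 : ∀ ω, r ω ∈ Set.Icc (0:ℝ) 1) :
    |∫ ω, r ω ∂F1 - ∫ ω, r ω ∂F0| ≤ (γ - 1) / γ := by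
  have h1r : ∀ ω, 1 - r ω ∈ Set.Icc (0 : ℝ) 1 := fun ω ↦
    ⟨by linarith [(hr01 ω).2], by linarith [(hr01 ω).1]⟩
  have hcompl := integral_sub_integral_le_of_rnDeriv_le hγ habs hbound
    (r := fun ω ↦ 1 - r ω) (hr.const_sub 1) h1r
  have hr_int {μ : Measure Ω} [IsFiniteMeasure μ] := integrable_of_forall_mem_Icc (μ := μ) hr hr01
  rw [integral_sub (integrable_const 1) hr_int, integral_sub (integrable_const 1) hr_int] at hcompl
  simp only [integral_const, probReal_univ, one_smul] at hcompl
  rw [abs_sub_le_iff]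
  exact ⟨integral_sub_integral_le_of_rnDeriv_le hγ habs hbound hr hr01, by linarith⟩
end

section
/- Let F0 and F1 be probability measures with F1 ≪ F0 and dF1/dF0 ≤ γ F0-a.e. for γ ≥ 1, and let ψ be a bounded measurable function with sup ψ − inf ψ = η. Then |∫ ψ dF1 − ∫ ψ dF0| ≤ η(γ − 1)/γ. -/
/-!
Write `f = dF1/dF0`, so that `0 ≤ f ≤ γ` and `∫ f dF0 = 1`. On `[0, γ]` one has
`(f - 1)⁺ ≤ (1 - γ⁻¹) f`, hence for `0 ≤ φ ≤ η` the change of measure gives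
`∫ φ dF1 - ∫ φ dF0 = ∫ (f - 1) φ dF0 ≤ η (1 - γ⁻¹) ∫ f dF0 = η (γ - 1) / γ`.
Applying this to `ψ - inf ψ` and to `sup ψ - ψ` bounds the difference from both sides.
-/

open MeasureTheory

theorem sub_one_mul_le_of_mem_Icc {t γ φ η : ℝ} (hγ : 1 ≤ γ) (ht : t ∈ Set.Icc 0 γ)
    (hφ : φ ∈ Set.Icc 0 η) : (t - 1) * φ ≤ η * (γ - 1) / γ * t := by
  obtain ⟨ht0, htγ⟩ := ht
  obtain ⟨hφ0, hφη⟩ := hφ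
  have hγ0 : 0 < γ := by linarith
  rw [div_mul_eq_mul_div, le_div_iff₀ hγ0]
  rcases le_total t 1 with ht1 | ht1
  · nlinarith [mul_nonneg (mul_nonneg (hφ0.trans hφη) (sub_nonneg.2 hγ)) ht0,
      mul_nonneg (sub_nonneg.2 ht1) hφ0]
  · nlinarith [mul_le_mul_of_nonneg_left hφη (sub_nonneg.2 ht1),
      mul_le_mul_of_nonneg_left htγ (hφ0.trans hφη)]

theorem integrable_of_forall_mem_Icc_s4 {Ω : Type*} [MeasurableSpace Ω] {μ : Measure Ω}
    [IsFiniteMeasure μ] {ψ : Ω → ℝ} (hψ : Measurable ψ) {m M : ℝ}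
    (hψm : ∀ ω, ψ ω ∈ Set.Icc m M) : Integrable ψ μ :=
  .of_bound hψ.aestronglyMeasurable (max |m| |M|) <|
    ae_of_all _ fun ω => abs_le_max_abs_abs (hψm ω).1 (hψm ω).2

theorem integral_sub_integral_le_of_rnDeriv_le_s4 {Ω : Type*} [MeasurableSpace Ω]
    {μ ν : Measure Ω} [IsFiniteMeasure μ] [IsFiniteMeasure ν] (hνμ : ν ≪ μ) {γ : ℝ}
    (hγ : 1 ≤ γ) (hbound : ∀ᵐ ω ∂μ, ν.rnDeriv μ ω ≤ ENNReal.ofReal γ)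
    {φ : Ω → ℝ} (hφ : Measurable φ) {η : ℝ} (hφη : ∀ ω, φ ω ∈ Set.Icc 0 η) :
    ∫ ω, φ ω ∂ν - ∫ ω, φ ω ∂μ ≤ η * (γ - 1) / γ * ν.real Set.univ := by
  set f : Ω → ℝ := fun ω => (ν.rnDeriv μ ω).toReal
  have hφμ : Integrable φ μ := integrable_of_forall_mem_Icc_s4 hφ hφη
  have hfφ : Integrable (fun ω => f ω * φ ω) μ :=
    (integrable_toReal_rnDeriv_mul_iff hνμ).2 (integrable_of_forall_mem_Icc_s4 hφ hφη)
  have hf_mem : ∀ᵐ ω ∂μ, f ω ∈ Set.Icc 0 γ := by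
    filter_upwards [hbound] with ω hω
    exact ⟨ENNReal.toReal_nonneg, ENNReal.toReal_le_of_le_ofReal (by linarith) hω⟩
  calc ∫ ω, φ ω ∂ν - ∫ ω, φ ω ∂μ = ∫ ω, (f ω - 1) * φ ω ∂μ := by
        simp_rw [sub_one_mul]
        rw [integral_sub hfφ hφμ, ← integral_rnDeriv_smul hνμ]
        rfl
    _ ≤ ∫ ω, η * (γ - 1) / γ * f ω ∂μ := by
        refine integral_mono_ae
          ((hfφ.sub hφμ).congr (ae_of_all _ fun ω => (sub_one_mul _ _).symm))
          (Measure.integrable_toReal_rnDeriv.const_mul _) ?_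
        filter_upwards [hf_mem] with ω hω
        exact sub_one_mul_le_of_mem_Icc hγ hω (hφη ω)
    _ = η * (γ - 1) / γ * ν.real Set.univ := by
        rw [integral_const_mul, Measure.integral_toReal_rnDeriv hνμ]

theorem integral_sub_integral_le_of_mem_Icc {Ω : Type*} [MeasurableSpace Ω]
    {μ ν : Measure Ω} [IsProbabilityMeasure μ] [IsProbabilityMeasure ν] (hνμ : ν ≪ μ) {γ : ℝ}
    (hγ : 1 ≤ γ) (hbound : ∀ᵐ ω ∂μ, ν.rnDeriv μ ω ≤ ENNReal.ofReal γ)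
    {ψ : Ω → ℝ} (hψ : Measurable ψ) {m M : ℝ} (hψm : ∀ ω, ψ ω ∈ Set.Icc m M) :
    ∫ ω, ψ ω ∂ν - ∫ ω, ψ ω ∂μ ≤ (M - m) * (γ - 1) / γ := by
  have hshift := integral_sub_integral_le_of_rnDeriv_le_s4 hνμ hγ hbound
    (hψ.sub_const m) (η := M - m) fun ω => ⟨sub_nonneg.2 (hψm ω).1, sub_le_sub_right (hψm ω).2 m⟩
  rwa [integral_sub (integrable_of_forall_mem_Icc_s4 hψ hψm) (integrable_const m),
    integral_sub (integrable_of_forall_mem_Icc_s4 hψ hψm) (integrable_const m),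
    integral_const, integral_const, probReal_univ, probReal_univ, one_smul, mul_one,
    sub_sub_sub_cancel_right] at hshift

theorem sharp_additive_bridge_bound_general
    {Ω : Type*} [MeasurableSpace Ω]
    (F0 F1 : Measure Ω) [IsProbabilityMeasure F0] [IsProbabilityMeasure F1]
    (γ : ℝ) (hγ : 1 ≤ γ)
    (habs : F1 ≪ F0)
    (hbound : ∀ᵐ u ∂F0, F1.rnDeriv F0 u ≤ ENNReal.ofReal γ)
    (ψ : Ω → ℝ) (hψ : Measurable ψ)
    (hbdd : BddAbove (Set.range ψ)) (hbdd' : BddBelow (Set.range ψ))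
    (η : ℝ) (hη : sSup (Set.range ψ) - sInf (Set.range ψ) = η) :
    |∫ ω, ψ ω ∂F1 - ∫ ω, ψ ω ∂F0| ≤ η * (γ - 1) / γ := by
  have hψ_mem : ∀ ω, ψ ω ∈ Set.Icc (sInf (Set.range ψ)) (sSup (Set.range ψ)) := fun ω =>
    ⟨csInf_le hbdd' (Set.mem_range_self ω), le_csSup hbdd (Set.mem_range_self ω)⟩
  have hneg_mem : ∀ ω, -ψ ω ∈ Set.Icc (-sSup (Set.range ψ)) (-sInf (Set.range ψ)) := fun ω =>
    ⟨neg_le_neg (hψ_mem ω).2, neg_le_neg (hψ_mem ω).1⟩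
  have hupper := integral_sub_integral_le_of_mem_Icc habs hγ hbound hψ hψ_mem
  have hlower := integral_sub_integral_le_of_mem_Icc habs hγ hbound hψ.neg hneg_mem
  rw [Pi.neg_def, integral_neg, integral_neg, neg_sub_neg, neg_sub_neg, hη] at hlower
  rw [hη] at hupper
  exact abs_sub_le_iff.2 ⟨hupper, hlower⟩

theorem sharp_additive_bridge_bound
    {Ω : Type*} [MeasurableSpace Ω] [Nonempty Ω]
    (F0 F1 : Measure Ω) [IsProbabilityMeasure F0] [IsProbabilityMeasure F1]
    (γ : ℝ) (hγ : 1 ≤ γ)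
    (habs : F1 ≪ F0)
    (hbound : ∀ᵐ u ∂F0, F1.rnDeriv F0 u ≤ ENNReal.ofReal γ)
    (ψ : Ω → ℝ) (hψ : Measurable ψ)
    (hbdd : BddAbove (Set.range ψ)) (hbdd' : BddBelow (Set.range ψ))
    (η : ℝ) (hη : sSup (Set.range ψ) - sInf (Set.range ψ) = η) :
    |∫ ω, ψ ω ∂F1 - ∫ ω, ψ ω ∂F0| ≤ η * (γ - 1) / γ :=
  sharp_additive_bridge_bound_general F0 F1 γ hγ habs hbound ψ hψ hbdd hbdd' η hη
end

section
/- Conditional Bayes balancing: let X take values in a finite set, let A = {x : g(x) = b} for a measurable function g and fixed b, and suppose the conditional probability P(M = m | X = x) is constant, equal to c > 0, for all x ∈ A. Then for all x ∈ A with P(X = x, g(X) = b) > 0, P(X = x | M = m, g(X) = b) = P(X = x | g(X) = b). -/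
/-!
If `M` has the same conditional probability `c` given each value of `X` in the fibre
`A = g⁻¹' {b}`, then summing over `A` gives `P(M, g(X) = b) = c · P(g(X) = b)`, while
`P(M, X = x) = c · P(X = x)` for `x ∈ A`. Conditioning on `M` and `g(X) = b` therefore
rescales numerator and denominator of `P(X = x | g(X) = b)` by the same factor `c`.
-/

open MeasureTheory ProbabilityTheory
open scoped ENNReal

section Balancing

variable {Ω ι : Type*} [MeasurableSpace Ω] [MeasurableSpace ι]

lemma measure_preimage_eq_mul_of_forall_fiber [MeasurableSingletonClass ι]
    {μ ν : Measure Ω} {X : Ω → ι} (hX : Measurable X) {s : Finset ι} {c : ℝ≥0∞}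
    (h : ∀ y ∈ s, ν (X ⁻¹' {y}) = c * μ (X ⁻¹' {y})) :
    ν (X ⁻¹' s) = c * μ (X ⁻¹' s) := by
  have hfib : ∀ y ∈ s, MeasurableSet (X ⁻¹' {y}) := fun y _ => hX (measurableSet_singleton y)
  rw [← sum_measure_preimage_singleton s hfib, ← sum_measure_preimage_singleton s hfib,
    Finset.mul_sum]
  exact Finset.sum_congr rfl h

lemma cond_inter_eq_cond_of_inter_eq_mul {μ : Measure Ω} {M B T : Set Ω} {c : ℝ≥0∞}
    (hT : MeasurableSet T) (hTB : T ⊆ B) (hc₀ : c ≠ 0) (hc : c ≠ ∞)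
    (hBM : μ (B ∩ M) = c * μ B) (hTM : μ (T ∩ M) = c * μ T) :
    μ[T | M ∩ B] = μ[T | B] := by
  have hMBT : M ∩ B ∩ T = T ∩ M := by
    rw [Set.inter_assoc, Set.inter_eq_right.mpr hTB, Set.inter_comm]
  rw [cond_apply' hT, cond_apply' hT, hMBT, Set.inter_eq_right.mpr hTB, Set.inter_comm, hBM, hTM,
    ENNReal.mul_inv (.inl hc₀) (.inl hc), mul_mul_mul_comm, ENNReal.inv_mul_cancel hc₀ hc,
    one_mul]

end Balancing

theorem discrete_balancing_general
    {Ω ι β : Type*} [MeasurableSpace Ω] [Fintype ι]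
    [MeasurableSpace ι] [MeasurableSingletonClass ι]
    (P : Measure Ω) [IsProbabilityMeasure P]
    (X : Ω → ι) (hX : Measurable X)
    (Mev : Set Ω)
    (g : ι → β) (b : β)
    (Bev : Set Ω) (hBev : Bev = X ⁻¹' {x | g x = b})
    (c : ℝ) (hc : 0 < c)
    (hbal : ∀ x, g x = b → (P[|X ⁻¹' {x}]) Mev = ENNReal.ofReal c) :
    ∀ x, g x = b → P (X ⁻¹' {x}) ≠ 0 →
      (P[|Mev ∩ Bev]) (X ⁻¹' {x}) = (P[|Bev]) (X ⁻¹' {x}) := by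
  classical
  intro x hx _
  have hfib : ∀ y, MeasurableSet (X ⁻¹' {y}) := fun y => hX (measurableSet_singleton y)
  have hB : Bev = X ⁻¹' ↑(Finset.univ.filter (g · = b)) := by
    rw [hBev, Finset.coe_filter_univ]
  have hBmeas : MeasurableSet Bev := hB ▸ hX (Finset.measurableSet _)
  have hfiber : ∀ y, g y = b → P (X ⁻¹' {y} ∩ Mev) = ENNReal.ofReal c * P (X ⁻¹' {y}) :=
    fun y hy => by rw [← hbal y hy, cond_mul_eq_inter (hfib y)]
  have hBM : P.restrict Mev Bev = ENNReal.ofReal c * P Bev :=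
    hB ▸ measure_preimage_eq_mul_of_forall_fiber hX fun y hy =>
      (Measure.restrict_apply (hfib y)).trans (hfiber y (by simpa using hy))
  rw [Measure.restrict_apply hBmeas] at hBM
  exact cond_inter_eq_cond_of_inter_eq_mul (hfib x)
    (hBev ▸ Set.preimage_mono (Set.singleton_subset_iff.mpr hx))
    (ENNReal.ofReal_pos.mpr hc).ne' ENNReal.ofReal_ne_top hBM (hfiber x hx)

theorem discrete_balancing
    {Ω ι β : Type*} [MeasurableSpace Ω] [Fintype ι]
    [MeasurableSpace ι] [MeasurableSingletonClass ι]
    (P : Measure Ω) [IsProbabilityMeasure P]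
    (X : Ω → ι) (hX : Measurable X)
    (Mev : Set Ω) (hMev : MeasurableSet Mev)
    (g : ι → β) (b : β)
    (Bev : Set Ω) (hBev : Bev = X ⁻¹' {x | g x = b})
    (hBpos : P Bev ≠ 0) (hMBpos : P (Mev ∩ Bev) ≠ 0)
    (c : ℝ) (hc : 0 < c)
    (hbal : ∀ x, g x = b → (P[|X ⁻¹' {x}]) Mev = ENNReal.ofReal c) :
    ∀ x, g x = b → P (X ⁻¹' {x}) ≠ 0 →
      (P[|Mev ∩ Bev]) (X ⁻¹' {x}) = (P[|Bev]) (X ⁻¹' {x}) :=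
  discrete_balancing_general P X hX Mev g b Bev hBev c hc hbal
end

section
/- Score-level ignorability from covariate-level ignorability (discrete case): in a discrete probability space with random variables Y, M, X and a function g of X, suppose (i) for each x, E[Y | M = m, X = x] = E[Y | X = x] (ignorability given X), and (ii) P(M = m | X = x) is constant over {x : g(x) = b}. Then E[Y | M = m, g(X) = b] = E[Y | g(X) = b]. -/
/-!
Balancing says that `P (M ∩ {X = x}) = c * P {X = x}` on every fibre `{X = x}` of the level set
`{g X = b}`, and ignorability then gives `∫ Y` over `M ∩ {X = x}` equal to `c` times `∫ Y` over
`{X = x}`. The level set is a finite disjoint union of these fibres, so both proportionalities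
hold on it as well, and the common factor `c` cancels in the conditional expectations.
-/

open MeasureTheory ProbabilityTheory

section

variable {Ω ι : Type*}

theorem inter_preimage_finset_eq_biUnion (s : Set Ω) (X : Ω → ι) (T : Finset ι) :
    s ∩ X ⁻¹' T = ⋃ x ∈ T, s ∩ X ⁻¹' {x} := by
  rw [← Set.inter_iUnion₂, Finset.set_biUnion_preimage_singleton]

theorem pairwiseDisjoint_inter_fiber (s : Set Ω) (X : Ω → ι) (T : Set ι) :
    T.PairwiseDisjoint fun x => s ∩ X ⁻¹' {x} :=
  (Set.pairwiseDisjoint_fiber X T).mono fun _ => Set.inter_subset_right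

variable [MeasurableSpace Ω] {μ : Measure Ω}

theorem integral_cond_eq_iff_setIntegral_eq_mul {s t : Set Ω} {f : Ω → ℝ} {c : ℝ} (hc : 0 < c)
    (ht : μ t ≠ ⊤) (hst : μ s = ENNReal.ofReal c * μ t) :
    ∫ ω, f ω ∂μ[|s] = ∫ ω, f ω ∂μ[|t] ↔ ∫ ω in s, f ω ∂μ = c * ∫ ω in t, f ω ∂μ := by
  obtain ht0 | ht0 := eq_or_ne (μ t) 0
  · have hs0 : μ s = 0 := by rw [hst, ht0, mul_zero]
    simp [cond_eq_zero_of_meas_eq_zero, Measure.restrict_eq_zero.2, hs0, ht0]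
  have ht_real : (μ t).toReal ≠ 0 := ENNReal.toReal_ne_zero.2 ⟨ht0, ht⟩
  simp only [ProbabilityTheory.cond, integral_smul_measure, smul_eq_mul, ENNReal.toReal_inv, hst,
    ENNReal.toReal_mul, ENNReal.toReal_ofReal hc.le]
  rw [mul_comm c, mul_inv, mul_assoc, mul_right_inj' (inv_ne_zero ht_real),
    inv_mul_eq_iff_eq_mul₀ hc.ne']

variable [MeasurableSpace ι] [MeasurableSingletonClass ι] {X : Ω → ι} {s : Set Ω}

theorem measure_inter_preimage_finset_eq_mul (hX : Measurable X) (hs : MeasurableSet s)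
    {a : ENNReal} (T : Finset ι) (h : ∀ x ∈ T, μ (s ∩ X ⁻¹' {x}) = a * μ (X ⁻¹' {x})) :
    μ (s ∩ X ⁻¹' T) = a * μ (X ⁻¹' T) := by
  rw [inter_preimage_finset_eq_biUnion, measure_biUnion_finset (pairwiseDisjoint_inter_fiber s X T)
      fun x _ => hs.inter (hX (measurableSet_singleton x)),
    ← sum_measure_preimage_singleton T fun x _ => hX (measurableSet_singleton x), Finset.mul_sum]
  exact Finset.sum_congr rfl h

theorem setIntegral_inter_preimage_finset_eq_mul (hX : Measurable X) (hs : MeasurableSet s)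
    {f : Ω → ℝ} (hf : Integrable f μ) {c : ℝ} (T : Finset ι)
    (h : ∀ x ∈ T, ∫ ω in s ∩ X ⁻¹' {x}, f ω ∂μ = c * ∫ ω in X ⁻¹' {x}, f ω ∂μ) :
    ∫ ω in s ∩ X ⁻¹' T, f ω ∂μ = c * ∫ ω in X ⁻¹' T, f ω ∂μ := by
  rw [inter_preimage_finset_eq_biUnion, ← Finset.set_biUnion_preimage_singleton,
    integral_biUnion_finset T (fun x _ => hs.inter (hX (measurableSet_singleton x)))
      (pairwiseDisjoint_inter_fiber s X T) fun _ _ => hf.integrableOn,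
    integral_biUnion_finset T (fun x _ => hX (measurableSet_singleton x))
      (Set.pairwiseDisjoint_fiber X T) fun _ _ => hf.integrableOn, Finset.mul_sum]
  exact Finset.sum_congr rfl h

end

theorem score_level_ignorability_general
    {Ω ι β : Type*} [MeasurableSpace Ω] [Fintype ι]
    [MeasurableSpace ι] [MeasurableSingletonClass ι]
    (P : Measure Ω) [IsProbabilityMeasure P]
    (Y : Ω → ℝ) (hYint : Integrable Y P)
    (X : Ω → ι) (hX : Measurable X)
    (Mev : Set Ω) (hMev : MeasurableSet Mev)
    (g : ι → β) (b : β)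
    (Bev : Set Ω) (hBev : Bev = X ⁻¹' {x | g x = b})
    (hignor : ∀ x, P (Mev ∩ X ⁻¹' {x}) ≠ 0 →
      ∫ ω, Y ω ∂(P[|Mev ∩ X ⁻¹' {x}]) = ∫ ω, Y ω ∂(P[|X ⁻¹' {x}]))
    (c : ℝ) (hc : 0 < c)
    (hbal : ∀ x, g x = b → (P[|X ⁻¹' {x}]) Mev = ENNReal.ofReal c) :
    ∫ ω, Y ω ∂(P[|Mev ∩ Bev]) = ∫ ω, Y ω ∂(P[|Bev]) := by
  classical
  set T : Finset ι := Finset.univ.filter (g · = b)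
  have hBT : Bev = X ⁻¹' T := by simp [hBev, T]
  have hfiber_measure : ∀ x ∈ T, P (Mev ∩ X ⁻¹' {x}) = ENNReal.ofReal c * P (X ⁻¹' {x}) := by
    intro x hx
    rw [← hbal x (Finset.mem_filter.1 hx).2, cond_mul_eq_inter (hX (measurableSet_singleton x)),
      Set.inter_comm]
  have hfiber_integral : ∀ x ∈ T,
      ∫ ω in Mev ∩ X ⁻¹' {x}, Y ω ∂P = c * ∫ ω in X ⁻¹' {x}, Y ω ∂P := by
    intro x hx
    rw [← integral_cond_eq_iff_setIntegral_eq_mul hc (measure_ne_top _ _) (hfiber_measure x hx)]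
    by_cases h0 : P (Mev ∩ X ⁻¹' {x}) = 0
    · have hF0 : P (X ⁻¹' {x}) = 0 := by
        simpa [hfiber_measure x hx, (ENNReal.ofReal_pos.2 hc).ne'] using h0
      rw [cond_eq_zero_of_meas_eq_zero h0, cond_eq_zero_of_meas_eq_zero hF0]
    · exact hignor x h0
  rw [integral_cond_eq_iff_setIntegral_eq_mul hc (measure_ne_top _ _)
      (hBT ▸ measure_inter_preimage_finset_eq_mul hX hMev T hfiber_measure), hBT]
  exact setIntegral_inter_preimage_finset_eq_mul hX hMev hYint T hfiber_integral

theorem score_level_ignorability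
    {Ω ι β : Type*} [MeasurableSpace Ω] [Fintype ι]
    [MeasurableSpace ι] [MeasurableSingletonClass ι]
    (P : Measure Ω) [IsProbabilityMeasure P]
    (Y : Ω → ℝ) (hY : Measurable Y) (hYint : Integrable Y P)
    (X : Ω → ι) (hX : Measurable X)
    (Mev : Set Ω) (hMev : MeasurableSet Mev)
    (g : ι → β) (b : β)
    (Bev : Set Ω) (hBev : Bev = X ⁻¹' {x | g x = b})
    (hBpos : P Bev ≠ 0) (hMBpos : P (Mev ∩ Bev) ≠ 0)
    (hignor : ∀ x, P (Mev ∩ X ⁻¹' {x}) ≠ 0 →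
      ∫ ω, Y ω ∂(P[|Mev ∩ X ⁻¹' {x}]) = ∫ ω, Y ω ∂(P[|X ⁻¹' {x}]))
    (c : ℝ) (hc : 0 < c)
    (hbal : ∀ x, g x = b → (P[|X ⁻¹' {x}]) Mev = ENNReal.ofReal c) :
    ∫ ω, Y ω ∂(P[|Mev ∩ Bev]) = ∫ ω, Y ω ∂(P[|Bev]) :=
  score_level_ignorability_general P Y hYint X hX Mev hMev g b Bev hBev hignor c hc hbal
end

section
/- Projection identity for the confounding function (discrete case): under the balancing condition that P(M = m | X = x) is constant on {x : g(x) = b}, define Δ*(x) = E[Y | M = m, X = x] − E[Y | X = x] and Δ(b) = E[Y | M = m, g(X) = b] − E[Y | g(X) = b]. Then Δ(b) = E[Δ*(X) | g(X) = b]. -/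
/-!
On each fibre `{X = x}` inside `{g(X) = b}`, the balancing condition gives
`P(M ∩ {X = x}) = c · P(X = x)`, so `P(X = x) · Δ*(x) = c⁻¹ ∫_{M ∩ {X = x}} Y - ∫_{X = x} Y`.
Summing over the fibres that make up `{g(X) = b}` and using `P(M ∩ {g(X) = b}) = c · P(g(X) = b)`
turns the sum into `P(g(X) = b) · Δ(b)`.
-/

open MeasureTheory ProbabilityTheory

namespace ProbabilityTheory

variable {Ω ι : Type*} [MeasurableSpace Ω] {μ : Measure Ω} {s t : Set Ω}

lemma integral_cond_eq_inv_mul_setIntegral (f : Ω → ℝ) (s : Set Ω) :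
    ∫ ω, f ω ∂μ[|s] = (μ.real s)⁻¹ * ∫ ω in s, f ω ∂μ := by
  rw [cond, integral_smul_measure, ENNReal.toReal_inv, smul_eq_mul, measureReal_def]

lemma measureReal_mul_integral_cond [IsFiniteMeasure μ] (f : Ω → ℝ) (s : Set Ω) :
    μ.real s * ∫ ω, f ω ∂μ[|s] = ∫ ω in s, f ω ∂μ := by
  by_cases hs : μ s = 0
  · simp [Measure.restrict_eq_zero.2 hs, measureReal_def, hs]
  · rw [integral_cond_eq_inv_mul_setIntegral, ← mul_assoc,
      mul_inv_cancel₀ ((measureReal_ne_zero_iff (measure_ne_top μ s)).2 hs), one_mul]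

lemma measureReal_inter_eq_mul_of_cond_eq [IsFiniteMeasure μ] (hs : MeasurableSet s) {c : ℝ}
    (hc : 0 ≤ c) (h : μ[t | s] = ENNReal.ofReal c) : μ.real (s ∩ t) = c * μ.real s := by
  rw [measureReal_def, ← cond_mul_eq_inter hs, h, ENNReal.toReal_mul,
    ENNReal.toReal_ofReal hc, measureReal_def]

lemma measureReal_mul_integral_cond_inter [IsFiniteMeasure μ] (hs : MeasurableSet s) {c : ℝ}
    (hc : 0 < c) (h : μ[t | s] = ENNReal.ofReal c) (f : Ω → ℝ) :
    μ.real s * ∫ ω, f ω ∂μ[|t ∩ s] = c⁻¹ * ∫ ω in t ∩ s, f ω ∂μ := by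
  rw [← measureReal_mul_integral_cond f (t ∩ s), Set.inter_comm t s,
    measureReal_inter_eq_mul_of_cond_eq hs hc.le h]
  field_simp

variable [MeasurableSpace ι] [MeasurableSingletonClass ι] {X : Ω → ι}

lemma setIntegral_inter_preimage_eq_sum (hX : Measurable X) (ht : MeasurableSet t)
    (S : Finset ι) {f : Ω → ℝ} (hf : ∀ x ∈ S, IntegrableOn f (t ∩ X ⁻¹' {x}) μ) :
    ∫ ω in t ∩ X ⁻¹' S, f ω ∂μ = ∑ x ∈ S, ∫ ω in t ∩ X ⁻¹' {x}, f ω ∂μ := by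
  rw [← Set.biUnion_preimage_singleton, Set.inter_iUnion₂]
  exact integral_biUnion_finset S (fun x _ => ht.inter (hX (measurableSet_singleton x)))
    (fun x hx y hy hxy => ((Set.pairwiseDisjoint_fiber X S) hx hy hxy).mono
      Set.inter_subset_right Set.inter_subset_right) hf

lemma setIntegral_preimage_eq_sum (hX : Measurable X) (S : Finset ι) {f : Ω → ℝ}
    (hf : ∀ x ∈ S, IntegrableOn f (X ⁻¹' {x}) μ) :
    ∫ ω in X ⁻¹' S, f ω ∂μ = ∑ x ∈ S, ∫ ω in X ⁻¹' {x}, f ω ∂μ := by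
  simpa using setIntegral_inter_preimage_eq_sum hX MeasurableSet.univ S (by simpa using hf)

lemma setIntegral_comp_preimage_eq_sum [IsFiniteMeasure μ] (hX : Measurable X) (S : Finset ι)
    (h : ι → ℝ) : ∫ ω in X ⁻¹' S, h (X ω) ∂μ = ∑ x ∈ S, μ.real (X ⁻¹' {x}) * h x := by
  have hconst (x : ι) : Set.EqOn (fun ω => h (X ω)) (fun _ => h x) (X ⁻¹' {x}) :=
    fun ω hω => congrArg h hω
  have hint (x : ι) : IntegrableOn (fun ω => h (X ω)) (X ⁻¹' {x}) μ :=
    IntegrableOn.congr_fun integrableOn_const (hconst x).symm (hX (measurableSet_singleton x))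
  rw [setIntegral_preimage_eq_sum hX S fun x _ => hint x]
  refine Finset.sum_congr rfl fun x _ => ?_
  rw [setIntegral_congr_fun (hX (measurableSet_singleton x)) (hconst x), setIntegral_const,
    smul_eq_mul]

lemma measureReal_inter_preimage_eq_mul [IsFiniteMeasure μ] (hX : Measurable X) (S : Finset ι)
    {c : ℝ} (hc : 0 ≤ c)
    (h : ∀ x ∈ S, μ[t | X ⁻¹' {x}] = ENNReal.ofReal c) :
    μ.real (t ∩ X ⁻¹' S) = c * μ.real (X ⁻¹' S) := by
  have hfib (x : ι) : MeasurableSet (X ⁻¹' {x}) := hX (measurableSet_singleton x)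
  rw [Set.inter_comm, ← measureReal_restrict_apply ((S.measurableSet).preimage hX),
    ← sum_measureReal_preimage_singleton S fun x _ => hfib x,
    ← sum_measureReal_preimage_singleton S fun x _ => hfib x, Finset.mul_sum]
  refine Finset.sum_congr rfl fun x hx => ?_
  rw [measureReal_restrict_apply (hfib x),
    measureReal_inter_eq_mul_of_cond_eq (hfib x) hc (h x hx)]

end ProbabilityTheory

theorem projection_of_confounding_function_general
    {Ω ι β : Type*} [MeasurableSpace Ω] [Fintype ι]
    [MeasurableSpace ι] [MeasurableSingletonClass ι]
    (P : Measure Ω) [IsProbabilityMeasure P]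
    (Y : Ω → ℝ) (hYint : Integrable Y P)
    (X : Ω → ι) (hX : Measurable X)
    (Mev : Set Ω) (hMev : MeasurableSet Mev)
    (g : ι → β) (b : β)
    (Bev : Set Ω) (hBev : Bev = X ⁻¹' {x | g x = b})
    (c : ℝ) (hc : 0 < c)
    (hbal : ∀ x, g x = b → (P[|X ⁻¹' {x}]) Mev = ENNReal.ofReal c)
    (Δstar : ι → ℝ)
    (hΔstar : ∀ x, g x = b → Δstar x =
      ∫ ω, Y ω ∂(P[|Mev ∩ X ⁻¹' {x}]) - ∫ ω, Y ω ∂(P[|X ⁻¹' {x}])) :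
    ∫ ω, Y ω ∂(P[|Mev ∩ Bev]) - ∫ ω, Y ω ∂(P[|Bev])
      = ∫ ω, Δstar (X ω) ∂(P[|Bev]) := by
  classical
  set S := Finset.univ.filter fun x => g x = b
  have hB : Bev = X ⁻¹' S := by rw [hBev, Finset.coe_filter_univ]
  have hbalS (x : ι) (hx : x ∈ S) : P[Mev | X ⁻¹' {x}] = ENNReal.ofReal c :=
    hbal x (Finset.mem_filter.1 hx).2
  have hfiber (x : ι) (hx : x ∈ S) : P.real (X ⁻¹' {x}) * Δstar x
      = c⁻¹ * ∫ ω in Mev ∩ X ⁻¹' {x}, Y ω ∂P - ∫ ω in X ⁻¹' {x}, Y ω ∂P := by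
    rw [hΔstar x (Finset.mem_filter.1 hx).2, mul_sub, measureReal_mul_integral_cond,
      measureReal_mul_integral_cond_inter (hX (measurableSet_singleton x)) hc (hbalS x hx)]
  rw [hB, integral_cond_eq_inv_mul_setIntegral, integral_cond_eq_inv_mul_setIntegral,
    integral_cond_eq_inv_mul_setIntegral, setIntegral_comp_preimage_eq_sum hX,
    Finset.sum_congr rfl hfiber, Finset.sum_sub_distrib, ← Finset.mul_sum,
    ← setIntegral_inter_preimage_eq_sum hX hMev S fun _ _ => hYint.integrableOn,
    ← setIntegral_preimage_eq_sum hX S fun _ _ => hYint.integrableOn,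
    measureReal_inter_preimage_eq_mul hX S hc.le hbalS]
  ring

theorem projection_of_confounding_function
    {Ω ι β : Type*} [MeasurableSpace Ω] [Fintype ι]
    [MeasurableSpace ι] [MeasurableSingletonClass ι]
    (P : Measure Ω) [IsProbabilityMeasure P]
    (Y : Ω → ℝ) (hY : Measurable Y) (hYint : Integrable Y P)
    (X : Ω → ι) (hX : Measurable X)
    (Mev : Set Ω) (hMev : MeasurableSet Mev)
    (g : ι → β) (b : β)
    (Bev : Set Ω) (hBev : Bev = X ⁻¹' {x | g x = b})
    (hBpos : P Bev ≠ 0) (hMBpos : P (Mev ∩ Bev) ≠ 0)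
    (hpos : ∀ x, g x = b → P (Mev ∩ X ⁻¹' {x}) ≠ 0)
    (c : ℝ) (hc : 0 < c)
    (hbal : ∀ x, g x = b → (P[|X ⁻¹' {x}]) Mev = ENNReal.ofReal c)
    (Δstar : ι → ℝ)
    (hΔstar : ∀ x, g x = b → Δstar x =
      ∫ ω, Y ω ∂(P[|Mev ∩ X ⁻¹' {x}]) - ∫ ω, Y ω ∂(P[|X ⁻¹' {x}])) :
    ∫ ω, Y ω ∂(P[|Mev ∩ Bev]) - ∫ ω, Y ω ∂(P[|Bev])
      = ∫ ω, Δstar (X ω) ∂(P[|Bev]) :=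
  projection_of_confounding_function_general P Y hYint X hX Mev hMev g b Bev hBev c hc hbal Δstar
    hΔstar
end
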